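/- Let (T,t,σ) be a gene tree over the species set B and let S be a species tree on B. If S displays every triple in 𝔖(T,t,σ), then there exists a reconciliation map μ from (T,t,σ) to S. -/

import Mathlib

/-- Event labels for the vertices of a gene tree: speciation `•`,
duplication `□`, and extant gene (leaf) `⊙`. -/
inductive Event : Type
  | spec : Event
  | dup : Event
  | leaf : Event
deriving DecidableEq

/-- A rooted tree structure on a partially ordered set: there is a greatest
element (the root) and the set of ancestors of every element is a chain.
(Finiteness is imposed via a `Fintype` instance.) -/
def IsRootedTree (V : Type*) [PartialOrder V] : Prop :=
  (∃ ρ : V, IsTop ρ) ∧ ∀ x : V, IsChain (· ≤ ·) {y : V | x ≤ y}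

/-- `L(x)`: the set of leaves (minimal elements) lying below `x`. -/
def leavesBelow {V : Type*} [PartialOrder V] (x : V) : Set V :=
  {y : V | IsMin y ∧ y ≤ x}

/-- A phylogenetic tree: a rooted tree in which every non-leaf vertex covers
at least two vertices. -/
def IsPhyloTree (V : Type*) [PartialOrder V] : Prop :=
  IsRootedTree V ∧ ∀ x : V, ¬ IsMin x → ∃ c c' : V, c ≠ c' ∧ c ⋖ x ∧ c' ⋖ x

/-- A species tree: a rooted tree whose root covers exactly one vertex and in
which every non-leaf vertex other than the root covers at least two vertices. -/
def IsSpeciesTree (W : Type*) [PartialOrder W] : Prop :=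
  IsRootedTree W ∧
  (∀ ρ : W, IsTop ρ → ∃! v : W, v ⋖ ρ) ∧
  (∀ x : W, ¬ IsMin x → ¬ IsTop x → ∃ c c' : W, c ≠ c' ∧ c ⋖ x ∧ c' ⋖ x)

/-- A rooted tree (on its vertex type) displays the triple `((a,b),c)`, i.e.
`lca(a,b) ≺ lca({a,b,c})`. -/
def Displays {W : Type*} [PartialOrder W] (a b c : W) : Prop :=
  ∃ w₁ w₂ : W, IsLUB ({a, b} : Set W) w₁ ∧ IsLUB ({a, b, c} : Set W) w₂ ∧ w₁ < w₂

/-- Condition (C): the sets of species below distinct children of a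
speciation vertex are disjoint. -/
def CondC {V B : Type*} [PartialOrder V] (t : V → Event) (σ : V → B) : Prop :=
  ∀ z c c' : V, t z = Event.spec → c ⋖ z → c' ⋖ z → c ≠ c' →
    σ '' leavesBelow c ∩ σ '' leavesBelow c' = ∅

/-- `(T,t,σ)` is a gene tree over the (abstract) species set `B`:
`T` is a phylogenetic tree with at least three leaves, `t` labels exactly the
leaves with `⊙`, `σ` maps the leaves onto `B`, and condition (C) holds. -/
def IsGeneTree {V B : Type*} [PartialOrder V] (t : V → Event) (σ : V → B) : Prop :=
  IsPhyloTree V ∧ 3 ≤ {x : V | IsMin x}.ncard ∧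
  (∀ x : V, t x = Event.leaf ↔ IsMin x) ∧
  (∀ b : B, ∃ x : V, IsMin x ∧ σ x = b) ∧
  CondC t σ

/-- `(T,t,σ)` is a gene tree whose species set `B` is the leaf set of the
species tree with vertex set `W`: `σ` maps the leaves of `T` onto the leaves
of `W`. -/
def IsGeneTreeOver {V W : Type*} [PartialOrder V] [PartialOrder W]
    (t : V → Event) (σ : V → W) : Prop :=
  IsPhyloTree V ∧ 3 ≤ {x : V | IsMin x}.ncard ∧
  (∀ x : V, t x = Event.leaf ↔ IsMin x) ∧
  (∀ x : V, IsMin x → IsMin (σ x)) ∧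
  (∀ b : W, IsMin b → ∃ x : V, IsMin x ∧ σ x = b) ∧
  CondC t σ

/-- The edges `[u,v]` of a species tree: pairs whose first component `u`
covers the second component `v` (so `.1` is the upper and `.2` the lower
endpoint of the edge). -/
abbrev SEdge (W : Type*) [PartialOrder W] : Type _ := {p : W × W // p.2 ⋖ p.1}

/-- The (non-strict) extension `≼` of the species-tree order to `W ∪ H`. -/
def extLE {W : Type*} [PartialOrder W] : W ⊕ SEdge W → W ⊕ SEdge W → Prop
  | Sum.inl x, Sum.inl y => x ≤ y
  | Sum.inl x, Sum.inr e => x ≤ e.1.2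
  | Sum.inr e, Sum.inl y => e.1.1 ≤ y
  | Sum.inr e, Sum.inr f => e.1.2 ≤ f.1.2

/-- The strict extension `≺` of the species-tree order to `W ∪ H`. -/
def extLT {W : Type*} [PartialOrder W] : W ⊕ SEdge W → W ⊕ SEdge W → Prop
  | Sum.inl x, Sum.inl y => x < y
  | Sum.inl x, Sum.inr e => x ≤ e.1.2
  | Sum.inr e, Sum.inl y => e.1.1 ≤ y
  | Sum.inr e, Sum.inr f => e.1.2 < f.1.2

/-- `μ` is a reconciliation map from the gene tree `(T,t,σ)` to the species
tree on `W` (with edge set `SEdge W`); the leaves of `W` play the role of the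
species set `B`. -/
def IsReconMap {V W : Type*} [PartialOrder V] [PartialOrder W]
    (t : V → Event) (σ : V → W) (μ : V → W ⊕ SEdge W) : Prop :=
  (∀ x : V, t x = Event.leaf → μ x = Sum.inl (σ x)) ∧
  (∀ x : V, t x = Event.spec → ∃ w : W, ¬ IsMin w ∧ μ x = Sum.inl w) ∧
  (∀ x : V, t x = Event.dup → ∃ e : SEdge W, μ x = Sum.inr e) ∧
  (∀ x y : V, x < y → t x = Event.dup → t y = Event.dup → extLE (μ x) (μ y)) ∧
  (∀ x y : V, x < y → ¬ (t x = Event.dup ∧ t y = Event.dup) →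
    extLT (μ x) (μ y)) ∧
  (∀ x : V, t x = Event.spec →
    ∃ w : W, IsLUB (σ '' leavesBelow x) w ∧ μ x = Sum.inl w)

/-- Membership of the triple `((x,y),z)` in `𝔊(T,t,σ)`: a triple of leaves
displayed by `T`, rooted in a speciation vertex, whose species are pairwise
distinct. -/
def TripleInG {V B : Type*} [PartialOrder V] (t : V → Event) (σ : V → B)
    (x y z : V) : Prop :=
  IsMin x ∧ IsMin y ∧ IsMin z ∧
  (∃ w₁ w₂ : V, IsLUB ({x, y} : Set V) w₁ ∧ IsLUB ({x, y, z} : Set V) w₂ ∧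
    w₁ < w₂ ∧ t w₂ = Event.spec) ∧
  σ x ≠ σ y ∧ σ y ≠ σ z ∧ σ x ≠ σ z



set_option linter.unusedSectionVars false
section AuxTree
variable {W : Type*} [PartialOrder W] [Fintype W]

lemma aux_exists_min_le (x : W) : ∃ m : W, IsMin m ∧ m ≤ x := by
  obtain ⟨b, hb, hmin⟩ := Finite.exists_le_minimal (p := fun _ : W => True) (a := x) trivial
  exact ⟨b, fun y hy => hmin.2 trivial hy, hb⟩

lemma aux_exists_covBy {x y : W} (h : x < y) : ∃ u : W, x ⋖ u ∧ u ≤ y := by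
  have hfin : ({z : W | x < z ∧ z ≤ y}).Finite := Set.toFinite _
  obtain ⟨m, hmy, hmin⟩ := hfin.exists_le_minimal (a := y) ⟨h, le_rfl⟩
  refine ⟨m, ⟨hmin.1.1, fun z hxz hzm => ?_⟩, hmin.1.2⟩
  exact absurd (hmin.2 ⟨hxz, hzm.le.trans hmin.1.2⟩ hzm.le) hzm.not_ge

lemma aux_exists_le_covBy {x y : W} (h : x < y) : ∃ c : W, x ≤ c ∧ c ⋖ y := by
  have hfin : ({z : W | x ≤ z ∧ z < y}).Finite := Set.toFinite _
  obtain ⟨m, hxm, hmax⟩ := hfin.exists_le_maximal (a := x) ⟨le_rfl, h⟩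
  refine ⟨m, hmax.1.1, hmax.1.2, fun z hmz hzy => ?_⟩
  exact absurd (hmax.2 ⟨hmax.1.1.trans hmz.le, hzy⟩ hmz.le) hmz.not_ge

lemma aux_exists_isLUB (hch : ∀ x : W, IsChain (· ≤ ·) {y : W | x ≤ y})
    (hρ : ∃ ρ : W, IsTop ρ) {A : Set W} (hA : A.Nonempty) : ∃ w : W, IsLUB A w := by
  obtain ⟨a, ha⟩ := hA
  obtain ⟨ρ, hρ⟩ := hρ
  have hρub : ρ ∈ upperBounds A := fun z _ => hρ z
  have hfin : (upperBounds A).Finite := Set.toFinite _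
  obtain ⟨m, _, hmin⟩ := hfin.exists_le_minimal hρub
  refine ⟨m, hmin.1, fun u hu => ?_⟩
  by_cases h : u = m
  · exact h.ge
  rcases hch a (show a ≤ u from hu ha) (show a ≤ m from hmin.1 ha) h with h1 | h2
  · exact hmin.2 hu h1
  · exact h2

lemma aux_covBy_unique (hch : ∀ x : W, IsChain (· ≤ ·) {y : W | x ≤ y})
    {w u u' : W} (h : w ⋖ u) (h' : w ⋖ u') : u = u' := by
  by_cases e : u = u'
  · exact e
  rcases hch w h.1.le h'.1.le e with h1 | h1
  · exact absurd (h1.lt_of_ne e) (h'.2 h.1)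
  · exact absurd (h1.lt_of_ne (Ne.symm e)) (h.2 h'.1)

lemma aux_pair_lub (hch : ∀ x : W, IsChain (· ≤ ·) {y : W | x ≤ y})
    (hρ : ∃ ρ : W, IsTop ρ) {A : Set W} {w α β : W}
    (hw : IsLUB A w) (hα : α ∈ A) (hβ : β ∈ A) (hαβ : α ≠ β)
    (hminA : ∀ a ∈ A, IsMin a) :
    ∃ a b, a ∈ A ∧ b ∈ A ∧ a ≠ b ∧ IsLUB ({a, b} : Set W) w := by
  have hex : ∀ b : W, ∃ v : W, IsLUB ({α, b} : Set W) v := fun b =>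
    aux_exists_isLUB hch hρ ⟨α, Set.mem_insert _ _⟩
  choose f hf using hex
  have hfin : A.Finite := Set.toFinite _
  obtain ⟨b₀, hb₀, hmax⟩ := Set.Finite.exists_maximalFor f A hfin ⟨β, hβ⟩
  have hαf : ∀ b : W, α ≤ f b := fun b => (hf b).1 (Set.mem_insert _ _)
  have hub : f b₀ ∈ upperBounds A := by
    intro b hb
    have hble : b ≤ f b := (hf b).1 (Set.mem_insert_of_mem _ rfl)
    by_cases e : f b = f b₀
    · exact hble.trans e.le
    rcases hch α (hαf b) (hαf b₀) e with h1 | h1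
    · exact hble.trans h1
    · exact hble.trans (hmax hb h1)
  have h1 : f b₀ ≤ w := (hf b₀).2 (by
    rintro v hv
    rcases hv with rfl | rfl
    · exact hw.1 hα
    · exact hw.1 hb₀)
  have h2 : w ≤ f b₀ := hw.2 hub
  have hwf : f b₀ = w := le_antisymm h1 h2
  refine ⟨α, b₀, hα, hb₀, ?_, hwf ▸ hf b₀⟩
  rintro rfl
  have hfα : f α = α := le_antisymm
    ((hf α).2 (by rintro v (rfl | rfl) <;> exact le_rfl)) (hαf α)
  have hwα : w = α := le_antisymm (h2.trans hfα.le) (hw.1 hα)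
  have hβw : β ≤ α := hwα ▸ hw.1 hβ
  exact hαβ (le_antisymm (hminA α hα hβw) hβw)

end AuxTree

set_option linter.unusedSectionVars false in
lemma aux_lub_triple {V : Type*} [PartialOrder V]
    (hch : ∀ x : V, IsChain (· ≤ ·) {y : V | x ≤ y})
    {y c c' a b z : V} (hcc' : c ≠ c') (hc : c ⋖ y) (hc' : c' ⋖ y)
    (ha : a ≤ c) (hb : b ≤ c) (hz : z ≤ c') :
    IsLUB ({a, b, z} : Set V) y := by
  have hcomp : ∀ p q r : V, p ≤ q → p ≤ r → q ≤ r ∨ r ≤ q := by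
    intro p q r hq hr
    by_cases e : q = r
    · exact Or.inl e.le
    · exact hch p hq hr e
  have hnc : ¬ (c ≤ c' ∨ c' ≤ c) := by
    rintro (h | h)
    · exact hc.2 (h.lt_of_ne hcc') hc'.1
    · exact hc'.2 (h.lt_of_ne (Ne.symm hcc')) hc.1
  constructor
  · rintro v (rfl | rfl | rfl)
    · exact ha.trans hc.1.le
    · exact hb.trans hc.1.le
    · exact hz.trans hc'.1.le
  · intro u hu
    have hau : a ≤ u := hu (Set.mem_insert _ _)
    have hzu : z ≤ u := hu (by simp)
    have hcu : c ≤ u := by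
      rcases hcomp a c u ha hau with h1 | h1
      · exact h1
      · exact absurd (hcomp z c c' (hzu.trans h1) hz) hnc
    · rcases hcomp a u y hau (ha.trans hc.1.le) with h1 | h1
      · by_cases e : u = y
        · exact e.ge
        have hult : u < y := h1.lt_of_ne e
        have : u = c := by
          by_cases e2 : c = u
          · exact e2.symm
          · exact absurd hult (hc.2 (hcu.lt_of_ne e2))
        exact absurd (hcomp z c c' (this ▸ hzu) hz) hnc
      · exact h1

/-- Theorem 1.  If the species tree `S` on `B` displays all
triples in `𝔖(T,t,σ)`, then there exists a reconciliation map `μ` from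
`(T,t,σ)` to `S`. -/
theorem exists_reconciliation_map_of_displays
    {V W : Type*} [PartialOrder V] [Fintype V] [PartialOrder W] [Fintype W]
    (t : V → Event) (σ : V → W)
    (hT : IsGeneTreeOver t σ) (hS : IsSpeciesTree W)
    (hdisp : ∀ x y z : V, TripleInG t σ x y z → Displays (σ x) (σ y) (σ z)) :
    ∃ μ : V → W ⊕ SEdge W, IsReconMap t σ μ := by
  classical
  obtain ⟨hphy, hcard, hleaf, hσmin, hσsurj, hC⟩ := hT
  obtain ⟨⟨⟨ρV, hρV⟩, hchV⟩, hbranchV⟩ := hphy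
  obtain ⟨⟨⟨ρW, hρW⟩, hchW⟩, hroot, hbranchW⟩ := hS
  -- nonempty sets of species below each vertex
  have hLne : ∀ x : V, (σ '' leavesBelow x).Nonempty := by
    intro x
    obtain ⟨m, hm, hmx⟩ := aux_exists_min_le x
    exact ⟨σ m, ⟨m, ⟨hm, hmx⟩, rfl⟩⟩
  -- the lca map
  have hlcaex : ∀ x : V, ∃ w : W, IsLUB (σ '' leavesBelow x) w := fun x =>
    aux_exists_isLUB hchW ⟨ρW, hρW⟩ (hLne x)
  choose lca hlca using hlcaex
  -- monotonicity
  have hmono : ∀ x y : V, x ≤ y → lca x ≤ lca y := by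
    intro x y h
    refine (hlca x).2 ?_
    rintro w ⟨l, ⟨hl, hlx⟩, rfl⟩
    exact (hlca y).1 ⟨l, ⟨hl, hlx.trans h⟩, rfl⟩
  -- lca at a leaf
  have hlcaleaf : ∀ x : V, IsMin x → lca x = σ x := by
    intro x hx
    have hset : σ '' leavesBelow x = {σ x} := by
      ext w
      simp only [leavesBelow, Set.mem_image, Set.mem_setOf_eq, Set.mem_singleton_iff]
      constructor
      · rintro ⟨l, ⟨hl, hlx⟩, rfl⟩
        rw [le_antisymm hlx (hx hlx)]
      · rintro rfl
        exact ⟨x, ⟨hx, le_rfl⟩, rfl⟩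
    exact (hlca x).unique (by rw [hset]; exact isLUB_singleton)
  -- root structure of W
  obtain ⟨v0, hv0, hv0uniq⟩ := hroot ρW hρW
  have hρWnotmin : ¬ IsMin ρW := fun h => hv0.1.not_ge (h hv0.1.le)
  have hltρ : ∀ w : W, w ≠ ρW → w ≤ v0 := by
    intro w hw
    obtain ⟨u, hwu, huρ⟩ := aux_exists_le_covBy ((hρW w).lt_of_ne hw)
    exact (hv0uniq u huρ) ▸ hwu
  have hlcalt : ∀ x : V, lca x < ρW := by
    intro x
    have h1 : lca x ≤ v0 := by
      refine (hlca x).2 ?_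
      rintro w ⟨l, ⟨hl, _⟩, rfl⟩
      exact hltρ _ (fun e => hρWnotmin (e ▸ hσmin l hl))
    exact h1.trans_lt hv0.1
  -- edge above the lca, for duplication vertices
  have hedge : ∀ x : V, ∃ u : W, lca x ⋖ u := by
    intro x
    obtain ⟨u, hu, _⟩ := aux_exists_covBy (hlcalt x)
    exact ⟨u, hu⟩
  choose eup heup using hedge
  have hupmin : ∀ (x : V) (yw : W), lca x < yw → eup x ≤ yw := by
    intro x yw h
    obtain ⟨u, hu, huy⟩ := aux_exists_covBy h
    rw [aux_covBy_unique hchW (heup x) hu]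
    exact huy
  -- speciation vertices map to non-leaves of W
  have hspecmin : ∀ x : V, t x = Event.spec → ¬ IsMin (lca x) := by
    intro x hx hmin
    have hxnm : ¬ IsMin x := fun h => by simp [(hleaf x).mpr h] at hx
    obtain ⟨c, c', hne, hc, hc'⟩ := hbranchV x hxnm
    obtain ⟨a, haMin, hac⟩ := aux_exists_min_le c
    obtain ⟨b, hbMin, hbc'⟩ := aux_exists_min_le c'
    have h1 : σ a ≤ lca x := (hlca x).1 ⟨a, ⟨haMin, hac.trans hc.1.le⟩, rfl⟩
    have h2 : σ b ≤ lca x := (hlca x).1 ⟨b, ⟨hbMin, hbc'.trans hc'.1.le⟩, rfl⟩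
    have hdisj := hC x c c' hx hc hc' hne
    have hab : σ a = σ b := ((le_antisymm h1 (hmin h1)).trans (le_antisymm h2 (hmin h2)).symm)
    exact Set.eq_empty_iff_forall_notMem.mp hdisj (σ a)
      ⟨⟨a, ⟨haMin, hac⟩, rfl⟩, hab ▸ ⟨b, ⟨hbMin, hbc'⟩, rfl⟩⟩
  -- the key lemma: strict increase at speciation vertices
  have hkey : ∀ y c : V, t y = Event.spec → c ⋖ y → lca c < lca y := by
    intro y c hspec hcy
    rcases lt_or_eq_of_le (hmono c y hcy.1.le) with h | heq
    · exact h
    exfalso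
    have hynotmin : ¬ IsMin y := fun h => hcy.1.not_ge (h hcy.1.le)
    obtain ⟨c1, c2, h12, hc1, hc2⟩ := hbranchV y hynotmin
    obtain ⟨c', hc'ne, hc'⟩ : ∃ c', c' ≠ c ∧ c' ⋖ y := by
      by_cases e : c1 = c
      · exact ⟨c2, fun h => h12 (e.trans h.symm), hc2⟩
      · exact ⟨c1, e, hc1⟩
    have hdisj := hC y c c' hspec hcy hc' (fun h => hc'ne h.symm)
    obtain ⟨z, hzMin, hzc'⟩ := aux_exists_min_le c'
    have hz_notin : σ z ∉ σ '' leavesBelow c := fun h =>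
      Set.eq_empty_iff_forall_notMem.mp hdisj (σ z) ⟨h, ⟨z, ⟨hzMin, hzc'⟩, rfl⟩⟩
    have hσz_le : σ z ≤ lca c := by
      rw [heq]
      exact (hlca y).1 ⟨z, ⟨hzMin, hzc'.trans hc'.1.le⟩, rfl⟩
    by_cases hsing : ∃ α β : W, α ∈ σ '' leavesBelow c ∧ β ∈ σ '' leavesBelow c ∧ α ≠ β
    · obtain ⟨α, β, hα, hβ, hαβ⟩ := hsing
      have hminA : ∀ a ∈ σ '' leavesBelow c, IsMin a := by
        rintro _ ⟨l, ⟨hl, _⟩, rfl⟩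
        exact hσmin l hl
      obtain ⟨a', b', ha', hb', hab', hlub⟩ :=
        aux_pair_lub hchW ⟨ρW, hρW⟩ (hlca c) hα hβ hαβ hminA
      obtain ⟨a, ⟨haMin, hac⟩, rfl⟩ := ha'
      obtain ⟨b, ⟨hbMin, hbc⟩, rfl⟩ := hb'
      have htrip : TripleInG t σ a b z := by
        refine ⟨haMin, hbMin, hzMin, ?_, hab', ?_, ?_⟩
        · obtain ⟨w1, hw1⟩ :=
            aux_exists_isLUB hchV ⟨ρV, hρV⟩ (Set.insert_nonempty a {b})
          have hw1c : w1 ≤ c := hw1.2 (by rintro v (rfl | rfl) <;> assumption)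
          exact ⟨w1, y, hw1,
            aux_lub_triple hchV (fun h => hc'ne h.symm) hcy hc' hac hbc hzc',
            hw1c.trans_lt hcy.1, hspec⟩
        · exact fun h => hz_notin (h ▸ ⟨b, ⟨hbMin, hbc⟩, rfl⟩)
        · exact fun h => hz_notin (h ▸ ⟨a, ⟨haMin, hac⟩, rfl⟩)
      obtain ⟨u1, u2, hu1, hu2, hu12⟩ := hdisp a b z htrip
      have e1 : u1 = lca c := hu1.unique hlub
      have h2a : u2 ≤ lca c := hu2.2 (by
        rintro v (rfl | rfl | rfl)
        · exact (hlca c).1 ⟨a, ⟨haMin, hac⟩, rfl⟩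
        · exact (hlca c).1 ⟨b, ⟨hbMin, hbc⟩, rfl⟩
        · exact hσz_le)
      exact absurd (hu12.trans_le (h2a.trans e1.ge)) (lt_irrefl u1)
    · push_neg at hsing
      obtain ⟨α, hαmem⟩ := hLne c
      have hset : σ '' leavesBelow c = {α} := by
        ext w
        simp only [Set.mem_singleton_iff]
        exact ⟨fun hw => hsing w α hw hαmem, fun hw => hw ▸ hαmem⟩
      have hlcac : lca c = α := (hlca c).unique (by rw [hset]; exact isLUB_singleton)
      obtain ⟨l, ⟨hl, _⟩, rfl⟩ := hαmem
      have : σ z = σ l := le_antisymm (hlcac ▸ hσz_le) (hσmin l hl (hlcac ▸ hσz_le))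
      exact hz_notin (this ▸ (by rw [hset]; rfl))
  -- strict increase towards any speciation ancestor
  have hstrict : ∀ x y : V, x < y → t y = Event.spec → lca x < lca y := by
    intro x y h hspec
    obtain ⟨c, hxc, hcy⟩ := aux_exists_le_covBy h
    exact (hmono x c hxc).trans_lt (hkey y c hspec hcy)
  -- vertices above leaves are not leaves
  have htnotleaf : ∀ x y : V, x < y → t y ≠ Event.leaf := by
    intro x y h hy
    exact h.not_ge (((hleaf y).mp hy) h.le)
  -- definition of μ
  refine ⟨fun x => if t x = Event.dup then Sum.inr ⟨(eup x, lca x), heup x⟩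
    else Sum.inl (lca x), ?_, ?_, ?_, ?_, ?_, ?_⟩
  · intro x hx
    simp only [if_neg (show ¬t x = Event.dup by simp [hx])]
    rw [hlcaleaf x ((hleaf x).mp hx)]
  · intro x hx
    exact ⟨lca x, hspecmin x hx, by simp only [if_neg (show ¬t x = Event.dup by simp [hx])]⟩
  · intro x hx
    exact ⟨⟨(eup x, lca x), heup x⟩, by simp only [if_pos hx]⟩
  · intro x y hxy hx hy
    simp only [if_pos hx, if_pos hy]
    show lca x ≤ lca y
    exact hmono x y hxy.le
  · intro x y hxy hnd
    have hy : t y ≠ Event.leaf := htnotleaf x y hxy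
    by_cases hyd : t y = Event.dup
    · have hx : t x ≠ Event.dup := fun h => hnd ⟨h, hyd⟩
      simp only [if_neg hx, if_pos hyd]
      show lca x ≤ lca y
      exact hmono x y hxy.le
    · have hys : t y = Event.spec := by
        cases h : t y
        · rfl
        · exact absurd h hyd
        · exact absurd h hy
      have hlt : lca x < lca y := hstrict x y hxy hys
      by_cases hxd : t x = Event.dup
      · simp only [if_pos hxd, if_neg (show ¬t y = Event.dup by simp [hys])]
        show eup x ≤ lca y
        exact hupmin x (lca y) hlt
      · simp only [if_neg hxd, if_neg (show ¬t y = Event.dup by simp [hys])]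
        show lca x < lca y
        exact hlt
  · intro x hx
    exact ⟨lca x, hlca x, by simp only [if_neg (show ¬t x = Event.dup by simp [hx])]⟩
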